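/- Let p be a prime with p ≡ 1 (mod 4), u ∈ ℚ_p with u² = −1, and let Φ : ℍ[ℚ,−1,−1] → M₂(ℚ_p) be the ℚ-algebra homomorphism x + yi + zj + tk ↦ [[x + yu, z + tu],[−(z − tu), x − yu]]. Let ℤ[1/p] = {q ∈ ℚ : p^n·q ∈ ℤ for some n ∈ ℕ} and let O'[1/p] be the ℤ[1/p]-span of {1, 2i, 2j, i+j+k} in ℍ[ℚ,−1,−1]. Then: (1) a pure quaternion x·i + y·j + z·k belongs to O'[1/p] if and only if x, y, z ∈ ℤ[1/p] and x ≡ y ≡ z (mod 2ℤ[1/p]); (2) for such α = x·i + y·j + z·k, the associated binary quadratic form f_{Φ(α)} equals (−y + zu)·X² + (−2xu)·XY + (−y − zu)·Y², i.e., it has the shape (a + bu)·X² + 2cu·XY + (a − bu)·Y² with a = −y, b = z, c = −x ∈ ℤ[1/p] satisfying a + b ≡ b + c ≡ 0 (mod 2ℤ[1/p]), and the determinant of f_{Φ(α)} equals a² + b² + c² = Nm(α); (3) conversely, every triple (a,b,c) ∈ ℤ[1/p]³ with a + b ≡ b + c ≡ 0 (mod 2ℤ[1/p]) arises in this way from a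 unique pure α ∈ O'[1/p]. -/
import Mathlib


open scoped Quaternion

/-- `zinv p q` says that the rational number `q` belongs to
`ℤ[1/p] = {q ∈ ℚ : p^n·q ∈ ℤ for some n ∈ ℕ}`. -/
def zinv (p : ℕ) (q : ℚ) : Prop :=
  ∃ (n : ℕ) (m : ℤ), (p : ℚ) ^ n * q = (m : ℚ)

/-- Membership in `O'[1/p]`, the `ℤ[1/p]`-span of `{1, 2i, 2j, i+j+k}` in `ℍ[ℚ,−1,−1]`. -/
def oPrimeMem (p : ℕ) (α : ℍ[ℚ, -1, -1]) : Prop :=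
  ∃ r s t w : ℚ, zinv p r ∧ zinv p s ∧ zinv p t ∧ zinv p w ∧
    α = (⟨r, 2 * s + w, 2 * t + w, w⟩ : ℍ[ℚ, -1, -1])

lemma zinv_add {p : ℕ} {q r : ℚ} (hq : zinv p q) (hr : zinv p r) : zinv p (q + r) := by
  obtain ⟨n, m, hm⟩ := hq
  obtain ⟨n', m', hm'⟩ := hr
  refine ⟨n + n', (p:ℤ)^n' * m + (p:ℤ)^n * m', ?_⟩
  push_cast
  linear_combination ((p:ℚ)^n') * hm + ((p:ℚ)^n) * hm'

lemma zinv_neg {p : ℕ} {q : ℚ} (hq : zinv p q) : zinv p (-q) := by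
  obtain ⟨n, m, hm⟩ := hq
  exact ⟨n, -m, by push_cast; linarith⟩

lemma zinv_sub {p : ℕ} {q r : ℚ} (hq : zinv p q) (hr : zinv p r) : zinv p (q - r) := by
  simpa [sub_eq_add_neg] using zinv_add hq (zinv_neg hr)

lemma zinv_two_mul {p : ℕ} {q : ℚ} (hq : zinv p q) : zinv p (2 * q) := by
  obtain ⟨n, m, hm⟩ := hq
  exact ⟨n, 2 * m, by push_cast; linarith⟩

lemma indep {p : ℕ} [Fact p.Prime] {u : ℚ_[p]} (hu : u ^ 2 = -1) {a b : ℚ}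
    (h : (a : ℚ_[p]) + (b : ℚ_[p]) * u = 0) : a = 0 ∧ b = 0 := by
  by_cases hb : b = 0
  · subst hb
    simp at h
    exact ⟨by exact_mod_cast h, rfl⟩
  · exfalso
    have hbp : (b : ℚ_[p]) ≠ 0 := by exact_mod_cast hb
    have hu' : u = ((-a / b : ℚ) : ℚ_[p]) := by
      push_cast
      field_simp
      linear_combination h
    have h2 : u ^ 2 = ((-a / b : ℚ) : ℚ_[p]) ^ 2 := by rw [← hu']
    rw [hu] at h2
    have : ((-a / b) ^ 2 : ℚ) = -1 := by exact_mod_cast h2.symm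
    nlinarith [sq_nonneg (-a / b)]

/-- Let `p ≡ 1 (mod 4)` be prime, `u ∈ ℚ_p` with `u² = −1`, and
`Φ : ℍ[ℚ,−1,−1] → M₂(ℚ_p)` the `ℚ`-algebra homomorphism
`x + yi + zj + tk ↦ [[x + yu, z + tu],[−(z − tu), x − yu]]`. Let `O'[1/p]` be the
`ℤ[1/p]`-span of `{1, 2i, 2j, i+j+k}`. Then: (1) a pure quaternion `x·i + y·j + z·k` lies
in `O'[1/p]` iff `x, y, z ∈ ℤ[1/p]` and `x ≡ y ≡ z (mod 2ℤ[1/p])`; (2) for such `α` the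
binary quadratic form `f_{Φ(α)}` equals `(−y+zu)X² + (−2xu)XY + (−y−zu)Y²`, of the shape
`(a+bu)X² + 2cuXY + (a−bu)Y²` with `a = −y, b = z, c = −x ∈ ℤ[1/p]` satisfying
`a + b ≡ b + c ≡ 0 (mod 2ℤ[1/p])`, and `det f_{Φ(α)} = a² + b² + c² = Nm(α)`;
(3) conversely every such triple `(a,b,c)` arises from a unique pure `α ∈ O'[1/p]`. -/
theorem padic_binary_quadratic_forms_of_discriminant_two_order
    (p : ℕ) [Fact p.Prime] (hp : p % 4 = 1) (u : ℚ_[p]) (hu : u ^ 2 = -1)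
    (Φ : ℍ[ℚ, -1, -1] →ₐ[ℚ] Matrix (Fin 2) (Fin 2) ℚ_[p])
    (hΦ : ∀ x y z t : ℚ, Φ (⟨x, y, z, t⟩ : ℍ[ℚ, -1, -1]) =
      !![(x : ℚ_[p]) + (y : ℚ_[p]) * u, (z : ℚ_[p]) + (t : ℚ_[p]) * u;
         -((z : ℚ_[p]) - (t : ℚ_[p]) * u), (x : ℚ_[p]) - (y : ℚ_[p]) * u]) :
    (∀ x y z : ℚ,
      oPrimeMem p (⟨0, x, y, z⟩ : ℍ[ℚ, -1, -1]) ↔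
        zinv p x ∧ zinv p y ∧ zinv p z ∧
          zinv p ((x - y) / 2) ∧ zinv p ((y - z) / 2)) ∧
    (∀ x y z : ℚ, oPrimeMem p (⟨0, x, y, z⟩ : ℍ[ℚ, -1, -1]) →
      (Φ (⟨0, x, y, z⟩ : ℍ[ℚ, -1, -1]) 1 0 = -(y : ℚ_[p]) + (z : ℚ_[p]) * u ∧
        Φ (⟨0, x, y, z⟩ : ℍ[ℚ, -1, -1]) 1 1 - Φ (⟨0, x, y, z⟩ : ℍ[ℚ, -1, -1]) 0 0 =
          -(2 * (x : ℚ_[p]) * u) ∧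
        -(Φ (⟨0, x, y, z⟩ : ℍ[ℚ, -1, -1]) 0 1) = -(y : ℚ_[p]) - (z : ℚ_[p]) * u) ∧
      zinv p ((-y + z) / 2) ∧ zinv p ((z + -x) / 2) ∧
      Matrix.det !![Φ (⟨0, x, y, z⟩ : ℍ[ℚ, -1, -1]) 1 0,
          (Φ (⟨0, x, y, z⟩ : ℍ[ℚ, -1, -1]) 1 1 - Φ (⟨0, x, y, z⟩ : ℍ[ℚ, -1, -1]) 0 0) / 2;
          (Φ (⟨0, x, y, z⟩ : ℍ[ℚ, -1, -1]) 1 1 - Φ (⟨0, x, y, z⟩ : ℍ[ℚ, -1, -1]) 0 0) / 2,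
          -(Φ (⟨0, x, y, z⟩ : ℍ[ℚ, -1, -1]) 0 1)] =
        (((-y) ^ 2 + z ^ 2 + (-x) ^ 2 : ℚ) : ℚ_[p])) ∧
    (∀ A B C : ℚ, zinv p A → zinv p B → zinv p C →
      zinv p ((A + B) / 2) → zinv p ((B + C) / 2) →
      ∃! α : ℍ[ℚ, -1, -1], α.re = 0 ∧ oPrimeMem p α ∧
        Φ α 1 0 = (A : ℚ_[p]) + (B : ℚ_[p]) * u ∧
        Φ α 1 1 - Φ α 0 0 = 2 * (C : ℚ_[p]) * u ∧
        -(Φ α 0 1) = (A : ℚ_[p]) - (B : ℚ_[p]) * u) := by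
  have entry : ∀ x y z t : ℚ,
      Φ (⟨x, y, z, t⟩ : ℍ[ℚ, -1, -1]) 0 0 = (x : ℚ_[p]) + (y : ℚ_[p]) * u ∧
      Φ (⟨x, y, z, t⟩ : ℍ[ℚ, -1, -1]) 0 1 = (z : ℚ_[p]) + (t : ℚ_[p]) * u ∧
      Φ (⟨x, y, z, t⟩ : ℍ[ℚ, -1, -1]) 1 0 = -((z : ℚ_[p]) - (t : ℚ_[p]) * u) ∧
      Φ (⟨x, y, z, t⟩ : ℍ[ℚ, -1, -1]) 1 1 = (x : ℚ_[p]) - (y : ℚ_[p]) * u := by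
    intro x y z t
    rw [hΦ]
    refine ⟨?_, ?_, ?_, ?_⟩ <;> simp [Matrix.cons_val_zero, Matrix.cons_val_one,
      Matrix.head_cons]
  have part1 : ∀ x y z : ℚ,
      oPrimeMem p (⟨0, x, y, z⟩ : ℍ[ℚ, -1, -1]) ↔
        zinv p x ∧ zinv p y ∧ zinv p z ∧
          zinv p ((x - y) / 2) ∧ zinv p ((y - z) / 2) := by
    intro x y z
    constructor
    · rintro ⟨r, s, t, w, hr, hs, ht, hw, heq⟩
      rw [QuaternionAlgebra.mk.injEq] at heq
      obtain ⟨h0, h1, h2, h3⟩ := heq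
      have e1 : (x - y) / 2 = s - t := by rw [h1, h2]; ring
      have e2 : (y - z) / 2 = t := by rw [h2, h3]; ring
      refine ⟨?_, ?_, ?_, ?_, ?_⟩
      · rw [h1]; exact zinv_add (zinv_two_mul hs) hw
      · rw [h2]; exact zinv_add (zinv_two_mul ht) hw
      · rw [h3]; exact hw
      · rw [e1]; exact zinv_sub hs ht
      · rw [e2]; exact ht
    · rintro ⟨hx, hy, hz, hxy, hyz⟩
      refine ⟨0, (x - y) / 2 + (y - z) / 2, (y - z) / 2, z,
        ⟨0, 0, by norm_num⟩, zinv_add hxy hyz, hyz, hz, ?_⟩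
      rw [QuaternionAlgebra.mk.injEq]
      refine ⟨rfl, by ring, by ring, rfl⟩
  refine ⟨part1, ?_, ?_⟩
  · intro x y z h
    obtain ⟨hx, hy, hz, hxy, hyz⟩ := (part1 x y z).mp h
    obtain ⟨e00, e01, e10, e11⟩ := entry 0 x y z
    have g1 : Φ (⟨0, x, y, z⟩ : ℍ[ℚ, -1, -1]) 1 0 = -(y : ℚ_[p]) + (z : ℚ_[p]) * u := by
      rw [e10]; ring
    have g2 : Φ (⟨0, x, y, z⟩ : ℍ[ℚ, -1, -1]) 1 1 - Φ (⟨0, x, y, z⟩ : ℍ[ℚ, -1, -1]) 0 0 =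
        -(2 * (x : ℚ_[p]) * u) := by
      rw [e11, e00]; push_cast; ring
    have g3 : -(Φ (⟨0, x, y, z⟩ : ℍ[ℚ, -1, -1]) 0 1) = -(y : ℚ_[p]) - (z : ℚ_[p]) * u := by
      rw [e01]; ring
    refine ⟨⟨g1, g2, g3⟩, ?_, ?_, ?_⟩
    · have : (-y + z) / 2 = -((y - z) / 2) := by ring
      rw [this]; exact zinv_neg hyz
    · have : (z + -x) / 2 = -((x - y) / 2 + (y - z) / 2) := by ring
      rw [this]; exact zinv_neg (zinv_add hxy hyz)
    · rw [g1, g2, g3, Matrix.det_fin_two_of]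
      push_cast
      linear_combination (-(z : ℚ_[p]) ^ 2 - (x : ℚ_[p]) ^ 2) * hu
  · intro A B C hA hB hC hAB hBC
    have hs1 : zinv p ((A - C) / 2) := by
      have : (A - C) / 2 = (A + B) / 2 - (B + C) / 2 := by ring
      rw [this]; exact zinv_sub hAB hBC
    have hs2 : zinv p ((-A - B) / 2) := by
      have : (-A - B) / 2 = -((A + B) / 2) := by ring
      rw [this]; exact zinv_neg hAB
    obtain ⟨e00, e01, e10, e11⟩ := entry 0 (-C) (-A) B
    refine ⟨(⟨0, -C, -A, B⟩ : ℍ[ℚ, -1, -1]), ⟨rfl, ?_, ?_, ?_, ?_⟩, ?_⟩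
    · refine ⟨0, (A - C) / 2 + (-A - B) / 2, (-A - B) / 2, B,
        ⟨0, 0, by norm_num⟩, zinv_add hs1 hs2, hs2, hB, ?_⟩
      rw [QuaternionAlgebra.mk.injEq]
      refine ⟨rfl, by ring, by ring, rfl⟩
    · rw [e10]; push_cast; ring
    · rw [e11, e00]; push_cast; ring
    · rw [e01]; push_cast; ring
    · rintro β ⟨hre, hmem, h1, h2, h3⟩
      have hβ : β = (⟨0, β.imI, β.imJ, β.imK⟩ : ℍ[ℚ, -1, -1]) := by
        ext <;> simp [hre]
      set x := β.imI
      set y := β.imJ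
      set z := β.imK
      rw [hβ] at h1 h2
      obtain ⟨f00, f01, f10, f11⟩ := entry 0 x y z
      rw [f10] at h1
      rw [f11, f00] at h2
      have k1 : ((-y - A : ℚ) : ℚ_[p]) + ((z - B : ℚ) : ℚ_[p]) * u = 0 := by
        push_cast; linear_combination h1
      have k2 : ((0 : ℚ) : ℚ_[p]) + ((-2 * x - 2 * C : ℚ) : ℚ_[p]) * u = 0 := by
        push_cast; linear_combination h2
      obtain ⟨ka, kb⟩ := indep hu k1
      obtain ⟨-, kc⟩ := indep hu k2
      rw [hβ, QuaternionAlgebra.mk.injEq]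
      refine ⟨rfl, by linarith, by linarith, by linarith⟩
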